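/- Let F be a field and let a₀, a₁, b, f₀, f₁, f₂ be nonzero elements of F. Define the map S₀ : (a₀,a₁,b,f₀,f₁,f₂) ↦ (a₀^{-1}, a₀²a₁, b/a₀, f₀(a₀f₀+a₀+f₁)/(f₀+f₁+1), f₁(a₀f₀+f₁+1)/(a₀(f₀+f₁+1)), a₀f₂(f₀+f₁+1)²/((a₀f₀+a₀+f₁)(a₀f₀+f₁+1))). Then, whenever all intermediate denominators are nonzero, S₀ ∘ S₀ is the identity map on such tuples. (This is the relation s₀² = 1 of the birational representation of the extended affine Weyl group W̃((A₁+A₁')^{(1)}) on the f-variables of the A₆^{(1)}-surface q-Painlevé system.) -/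

import Mathlib

/-- The birational action of the generator `s₀` of `W̃((A₁+A₁')⁽¹⁾)` on the
tuple `(a₀, a₁, b, f₀, f₁, f₂)` for the `A₆⁽¹⁾`-surface `q`-Painlevé system. -/
def weylS0A6 {F : Type*} [Field F] :
    F × F × F × F × F × F → F × F × F × F × F × F
  | (a0, a1, b, f0, f1, f2) =>
    (a0⁻¹, a0 ^ 2 * a1, b / a0,
      f0 * (a0 * f0 + a0 + f1) / (f0 + f1 + 1),
      f1 * (a0 * f0 + f1 + 1) / (a0 * (f0 + f1 + 1)),
      a0 * f2 * (f0 + f1 + 1) ^ 2 / ((a0 * f0 + a0 + f1) * (a0 * f0 + f1 + 1)))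

/-- Nonvanishing of the denominators appearing in `s₀`. -/
def denS0A6 {F : Type*} [Field F] (x : F × F × F × F × F × F) : Prop :=
  match x with
  | (a0, _, _, f0, f1, _) =>
    f0 + f1 + 1 ≠ 0 ∧ a0 * f0 + a0 + f1 ≠ 0 ∧ a0 * f0 + f1 + 1 ≠ 0

/-!
Write `D₁ = f₀ + f₁ + 1`, `D₂ = a₀f₀ + a₀ + f₁`, `D₃ = a₀f₀ + f₁ + 1` for the three denominators
of `s₀`. Evaluated at the image `s₀(x)` they become `D₂D₃/(a₀D₁)`, `D₃/a₀` and `D₂/a₀`: the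
denominators of the second application are, up to powers of `a₀`, products of those of the first.
Substituting these into `s₀(s₀(x))`, every coordinate collapses to the original one.
-/

section
variable {F : Type*} [Field F] {a0 f0 f1 : F}

theorem weylS0A6_f0_add_f1_add_one (ha0 : a0 ≠ 0) (h : f0 + f1 + 1 ≠ 0) :
    f0 * (a0 * f0 + a0 + f1) / (f0 + f1 + 1) + f1 * (a0 * f0 + f1 + 1) / (a0 * (f0 + f1 + 1)) + 1
      = (a0 * f0 + a0 + f1) * (a0 * f0 + f1 + 1) / (a0 * (f0 + f1 + 1)) := by
  field_simp
  ring

theorem weylS0A6_a0_mul_f0_add_a0_add_f1 (ha0 : a0 ≠ 0) (h : f0 + f1 + 1 ≠ 0) :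
    a0⁻¹ * (f0 * (a0 * f0 + a0 + f1) / (f0 + f1 + 1)) + a0⁻¹
        + f1 * (a0 * f0 + f1 + 1) / (a0 * (f0 + f1 + 1))
      = (a0 * f0 + f1 + 1) / a0 := by
  field_simp
  ring

theorem weylS0A6_a0_mul_f0_add_f1_add_one (ha0 : a0 ≠ 0) (h : f0 + f1 + 1 ≠ 0) :
    a0⁻¹ * (f0 * (a0 * f0 + a0 + f1) / (f0 + f1 + 1))
        + f1 * (a0 * f0 + f1 + 1) / (a0 * (f0 + f1 + 1)) + 1
      = (a0 * f0 + a0 + f1) / a0 := by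
  field_simp
  ring

end

theorem weylS0A6_involutive_general
    (F : Type*) [Field F] (a0 a1 b f0 f1 f2 : F)
    (ha0 : a0 ≠ 0)
    (h1 : denS0A6 (a0, a1, b, f0, f1, f2)) :
    weylS0A6 (weylS0A6 (a0, a1, b, f0, f1, f2)) = (a0, a1, b, f0, f1, f2) := by
  obtain ⟨d1, d2, d3⟩ := h1
  simp only [weylS0A6, weylS0A6_f0_add_f1_add_one ha0 d1, weylS0A6_a0_mul_f0_add_a0_add_f1 ha0 d1,
    weylS0A6_a0_mul_f0_add_f1_add_one ha0 d1, Prod.mk.injEq]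
  -- after the substitution the denominators enter only as nonzero atoms
  generalize f0 + f1 + 1 = D₁, a0 * f0 + a0 + f1 = D₂, a0 * f0 + f1 + 1 = D₃ at *
  refine ⟨inv_inv a0, ?_, ?_, ?_, ?_, ?_⟩ <;> field_simp

/-- the relation `s₀² = 1` of the birational representation of
`W̃((A₁+A₁')⁽¹⁾)` on the `f`-variables of the `A₆⁽¹⁾`-surface
`q`-Painlevé system. -/
theorem weylS0A6_involutive
    (F : Type*) [Field F] (a0 a1 b f0 f1 f2 : F)
    (ha0 : a0 ≠ 0) (ha1 : a1 ≠ 0) (hb : b ≠ 0)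
    (hf0 : f0 ≠ 0) (hf1 : f1 ≠ 0) (hf2 : f2 ≠ 0)
    (h1 : denS0A6 (a0, a1, b, f0, f1, f2))
    (h2 : denS0A6 (weylS0A6 (a0, a1, b, f0, f1, f2))) :
    weylS0A6 (weylS0A6 (a0, a1, b, f0, f1, f2)) = (a0, a1, b, f0, f1, f2) :=
  weylS0A6_involutive_general F a0 a1 b f0 f1 f2 ha0 h1
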